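/- arXiv:1303.4982 — 3 statements merged into one kernel-verified Lean document; each statement's English description precedes it below -/
import Mathlib

section
/- (Variable version of the Lovász Local Lemma.) Let V be a finite index set and for each v ∈ V let (Ω_v, μ_v) be a probability space; equip Ω = ∏_{v∈V} Ω_v with the product probability measure P. Let 𝒜 be a finite set of events in Ω such that each A ∈ 𝒜 is measurable with respect to the coordinates in some finite set vbl(A) ⊆ V. If there exists an assignment x : 𝒜 → (0,1) such that for every A ∈ 𝒜, P(A) ≤ x(A) · ∏_{B ∈ 𝒜, B ≠ A, vbl(A) ∩ vbl(B) ≠ ∅} (1 − x(B)), then P(⋂_{A∈𝒜} Aᶜ) ≥ ∏_{A∈𝒜} (1 − x(A)) > 0; in particular, with positive probability none of the events in 𝒜 occurs. -/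
/-!
In a product space an event determined by the coordinates `vbl A` is independent of every event
determined by coordinates disjoint from `vbl A`, so the variable version is an instance of the
lopsided local lemma with `Γ A` the events other than `A` sharing a variable with `A`.

For the local lemma one shows by strong induction on `S ⊆ 𝒜` that
`P(A ∩ ⋂_{B ∈ S} Bᶜ) ≤ x A · P(⋂_{B ∈ S} Bᶜ)`. Split `S` into its part `N` inside `Γ A` and the
rest `R`. Then `P(A ∩ ⋂_S Bᶜ) ≤ P(A) P(⋂_R Bᶜ)`, while removing the events of `N` one at a time,
each step controlled by the induction hypothesis for a proper subset of `S`, gives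
`P(⋂_S Bᶜ) ≥ ∏_N (1 - x B) · P(⋂_R Bᶜ)`. Removing all of `𝒜` in the same way gives the bound.
-/

open MeasureTheory ProbabilityTheory

section CoordinateEvents

variable {V : Type*} {Ω : V → Type*} [∀ v, MeasurableSpace (Ω v)]

lemma measurableSet_of_measurableSet_comap_restrict {s : Finset V} {A : Set (∀ v, Ω v)}
    (hA : MeasurableSet[MeasurableSpace.comap s.restrict inferInstance] A) : MeasurableSet A :=
  (Finset.measurable_restrict s).comap_le A hA

lemma MeasurableSet.comap_restrict_mono {s t : Finset V} (hst : s ⊆ t) {A : Set (∀ v, Ω v)}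
    (hA : MeasurableSet[MeasurableSpace.comap s.restrict inferInstance] A) :
    MeasurableSet[MeasurableSpace.comap t.restrict inferInstance] A := by
  rw [← Finset.restrict₂_comp_restrict hst, ← MeasurableSpace.comap_comp] at hA
  exact MeasurableSpace.comap_mono (Finset.measurable_restrict₂ hst).comap_le A hA

lemma measurableSet_biInter_compl_comap_restrict_biUnion [DecidableEq V]
    (S : Finset (Set (∀ v, Ω v))) (vbl : Set (∀ v, Ω v) → Finset V)
    (hS : ∀ B ∈ S, MeasurableSet[MeasurableSpace.comap (vbl B).restrict inferInstance] B) :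
    MeasurableSet[MeasurableSpace.comap (S.biUnion vbl).restrict inferInstance] (⋂ B ∈ S, Bᶜ) :=
  .biInter S.countable_toSet fun B hB =>
    ((hS B hB).comap_restrict_mono (Finset.subset_biUnion_of_mem vbl hB)).compl

lemma MeasureTheory.Measure.pi_inter_eq_mul_of_disjoint [Fintype V] (μ : ∀ v, Measure (Ω v))
    [∀ v, IsProbabilityMeasure (μ v)] {s t : Finset V} (hst : Disjoint s t) {A B : Set (∀ v, Ω v)}
    (hA : MeasurableSet[MeasurableSpace.comap s.restrict inferInstance] A)
    (hB : MeasurableSet[MeasurableSpace.comap t.restrict inferInstance] B) :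
    Measure.pi μ (A ∩ B) = Measure.pi μ A * Measure.pi μ B :=
  ((iIndepFun_pi (X := fun _ => id) fun _ => aemeasurable_id).indepFun_finset s t hst
    fun v => measurable_pi_apply v).meas_inter hA hB

lemma MeasureTheory.Measure.pi_inter_biInter_compl_eq_mul [Fintype V] [DecidableEq V]
    (μ : ∀ v, Measure (Ω v)) [∀ v, IsProbabilityMeasure (μ v)]
    (vbl : Set (∀ v, Ω v) → Finset V) {A : Set (∀ v, Ω v)} {S : Finset (Set (∀ v, Ω v))}
    (hA : MeasurableSet[MeasurableSpace.comap (vbl A).restrict inferInstance] A)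
    (hS : ∀ B ∈ S, MeasurableSet[MeasurableSpace.comap (vbl B).restrict inferInstance] B)
    (hdisj : ∀ B ∈ S, Disjoint (vbl A) (vbl B)) :
    Measure.pi μ (A ∩ ⋂ B ∈ S, Bᶜ) = Measure.pi μ A * Measure.pi μ (⋂ B ∈ S, Bᶜ) :=
  Measure.pi_inter_eq_mul_of_disjoint μ ((Finset.disjoint_biUnion_right _ _ _).2 hdisj) hA
    (measurableSet_biInter_compl_comap_restrict_biUnion S vbl hS)

end CoordinateEvents

section LocalLemma

variable {α : Type*} [MeasurableSpace α] {P : Measure α} {x : Set α → ℝ}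

lemma one_sub_mul_measureReal_le_measureReal_compl_inter [IsFiniteMeasure P] {C E : Set α}
    (hC : MeasurableSet C) {t : ℝ} (h : P.real (C ∩ E) ≤ t * P.real E) :
    (1 - t) * P.real E ≤ P.real (Cᶜ ∩ E) := by
  have := measureReal_inter_add_sdiff (μ := P) (s := E) hC
  rw [Set.inter_comm] at h
  rw [Set.inter_comm, ← Set.sdiff_eq]
  linarith

lemma prod_one_sub_mul_measureReal_biInter_compl_le [IsFiniteMeasure P] {T S : Finset (Set α)}
    (hTS : Disjoint T S) (hmeas : ∀ C ∈ T, MeasurableSet C) (hx : ∀ C ∈ T, x C ≤ 1)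
    (h : ∀ C ∈ T, ∀ S' ⊆ T ∪ S, C ∉ S' →
      P.real (C ∩ ⋂ B ∈ S', Bᶜ) ≤ x C * P.real (⋂ B ∈ S', Bᶜ)) :
    (∏ C ∈ T, (1 - x C)) * P.real (⋂ B ∈ S, Bᶜ) ≤ P.real (⋂ B ∈ T ∪ S, Bᶜ) := by
  classical
  induction T using Finset.induction_on with
  | empty => simp
  | insert C T hCT ih =>
    have hCTS : C ∉ T ∪ S := by
      simpa [hCT] using Finset.disjoint_left.1 hTS (Finset.mem_insert_self C T)
    rw [Finset.prod_insert hCT, Finset.insert_union, Finset.set_biInter_insert, mul_assoc]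
    calc (1 - x C) * ((∏ B ∈ T, (1 - x B)) * P.real (⋂ B ∈ S, Bᶜ))
        ≤ (1 - x C) * P.real (⋂ B ∈ T ∪ S, Bᶜ) := by
          gcongr
          · exact sub_nonneg.2 (hx C (Finset.mem_insert_self C T))
          · refine ih (Finset.disjoint_insert_left.1 hTS).2 (fun B hB => hmeas B (by simp [hB]))
              (fun B hB => hx B (by simp [hB])) fun B hB S' hS' hBS' =>
                h B (by simp [hB]) S' ?_ hBS'
            exact hS'.trans (Finset.union_subset_union (Finset.subset_insert C T) le_rfl)
      _ ≤ P.real (Cᶜ ∩ ⋂ B ∈ T ∪ S, Bᶜ) :=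
          one_sub_mul_measureReal_le_measureReal_compl_inter (hmeas C (by simp))
            (h C (by simp) _ (by simp [Finset.insert_union]) hCTS)

lemma measureReal_inter_biInter_compl_le_mul [IsFiniteMeasure P] (𝒜 : Finset (Set α))
    (Γ : Set α → Finset (Set α)) (hΓ : ∀ A ∈ 𝒜, Γ A ⊆ 𝒜) (hmeas : ∀ A ∈ 𝒜, MeasurableSet A)
    (hindep : ∀ A ∈ 𝒜, ∀ S ⊆ 𝒜, A ∉ S → Disjoint S (Γ A) →
      P.real (A ∩ ⋂ B ∈ S, Bᶜ) ≤ P.real A * P.real (⋂ B ∈ S, Bᶜ))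
    (hx : ∀ A ∈ 𝒜, x A ∈ Set.Icc 0 1)
    (hcond : ∀ A ∈ 𝒜, P.real A ≤ x A * ∏ B ∈ Γ A, (1 - x B))
    (S : Finset (Set α)) (hS : S ⊆ 𝒜) {A : Set α} (hA : A ∈ 𝒜) :
    P.real (A ∩ ⋂ B ∈ S, Bᶜ) ≤ x A * P.real (⋂ B ∈ S, Bᶜ) := by
  classical
  induction S using Finset.strongInduction generalizing A with
  | H S ih =>
  by_cases hAS : A ∈ S
  · have hempty : A ∩ ⋂ B ∈ S, Bᶜ = ∅ :=
      Set.disjoint_iff_inter_eq_empty.1 <|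
        Set.disjoint_right.2 fun _ hω => Set.mem_iInter₂.1 hω A hAS
    rw [hempty, measureReal_empty]
    exact mul_nonneg (hx A hA).1 measureReal_nonneg
  set N := S.filter (· ∈ Γ A)
  set R := S.filter (· ∉ Γ A)
  have hNR : N ∪ R = S := Finset.filter_union_filter_not_eq _ S
  have hprod : ∏ B ∈ Γ A, (1 - x B) ≤ ∏ B ∈ N, (1 - x B) :=
    Finset.prod_le_prod_of_subset_of_le_one (fun B hB => (Finset.mem_filter.1 hB).2)
      (fun B hB => sub_nonneg.2 (hx B (hΓ A hA hB)).2)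
      (fun B hB _ => sub_le_self _ (hx B (hΓ A hA hB)).1)
  have hlower : (∏ B ∈ N, (1 - x B)) * P.real (⋂ B ∈ R, Bᶜ) ≤ P.real (⋂ B ∈ S, Bᶜ) := by
    conv_rhs => rw [← hNR]
    refine prod_one_sub_mul_measureReal_biInter_compl_le (Finset.disjoint_filter_filter_not _ _ _)
      (fun C hC => hmeas C (hS (Finset.filter_subset _ _ hC)))
      (fun C hC => (hx C (hS (Finset.filter_subset _ _ hC))).2) fun C hC S' hS' hCS' => ?_
    rw [hNR] at hS'
    have hCS : C ∈ S := Finset.filter_subset _ _ hC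
    exact ih S' ((Finset.ssubset_iff_of_subset hS').2 ⟨C, hCS, hCS'⟩) (hS'.trans hS) (hS hCS)
  calc P.real (A ∩ ⋂ B ∈ S, Bᶜ) ≤ P.real (A ∩ ⋂ B ∈ R, Bᶜ) := by
        refine measureReal_mono (Set.inter_subset_inter_right _ ?_)
        exact Set.biInter_subset_biInter_left (Finset.coe_subset.2 (Finset.filter_subset _ S))
    _ ≤ P.real A * P.real (⋂ B ∈ R, Bᶜ) :=
        hindep A hA R ((Finset.filter_subset _ S).trans hS)
          (fun h => hAS (Finset.filter_subset _ S h))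
          (Finset.disjoint_left.2 fun B hB => (Finset.mem_filter.1 hB).2)
    _ ≤ x A * (∏ B ∈ N, (1 - x B)) * P.real (⋂ B ∈ R, Bᶜ) := by
        gcongr
        exact (hcond A hA).trans (mul_le_mul_of_nonneg_left hprod (hx A hA).1)
    _ ≤ x A * P.real (⋂ B ∈ S, Bᶜ) := by
        rw [mul_assoc]
        exact mul_le_mul_of_nonneg_left hlower (hx A hA).1

theorem prod_one_sub_le_measureReal_biInter_compl [IsProbabilityMeasure P] (𝒜 : Finset (Set α))
    (Γ : Set α → Finset (Set α)) (hΓ : ∀ A ∈ 𝒜, Γ A ⊆ 𝒜) (hmeas : ∀ A ∈ 𝒜, MeasurableSet A)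
    (hindep : ∀ A ∈ 𝒜, ∀ S ⊆ 𝒜, A ∉ S → Disjoint S (Γ A) →
      P.real (A ∩ ⋂ B ∈ S, Bᶜ) ≤ P.real A * P.real (⋂ B ∈ S, Bᶜ))
    (hx : ∀ A ∈ 𝒜, x A ∈ Set.Icc 0 1)
    (hcond : ∀ A ∈ 𝒜, P.real A ≤ x A * ∏ B ∈ Γ A, (1 - x B)) :
    ∏ A ∈ 𝒜, (1 - x A) ≤ P.real (⋂ A ∈ 𝒜, Aᶜ) := by
  simpa using prod_one_sub_mul_measureReal_biInter_compl_le (Finset.disjoint_empty_right 𝒜) hmeas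
    (fun A hA => (hx A hA).2) fun A hA S hS _ =>
      measureReal_inter_biInter_compl_le_mul 𝒜 Γ hΓ hmeas hindep hx hcond S (by simpa using hS) hA

end LocalLemma

open scoped Classical in
/-- **variable version of the Lovász Local Lemma.** Let `V` be a finite index
set, `(Ω_v, μ_v)` probability spaces, `P` the product measure on `Ω = ∏_v Ω_v`, and `𝒜` a
finite set of events such that each `A ∈ 𝒜` is measurable with respect to the coordinates in
the finite set `vbl A ⊆ V`. If `x : 𝒜 → (0,1)` satisfies
`P(A) ≤ x A * ∏_{B ∈ 𝒜, B ≠ A, vbl A ∩ vbl B ≠ ∅} (1 - x B)` for every `A ∈ 𝒜`, then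
`P(⋂_{A ∈ 𝒜} Aᶜ) ≥ ∏_{A ∈ 𝒜} (1 - x A) > 0`. -/
theorem lovasz_local_lemma_variable_version
    {V : Type*} [Fintype V] {Ω : V → Type*}
    [∀ v, MeasurableSpace (Ω v)] (μ : ∀ v, Measure (Ω v))
    [∀ v, IsProbabilityMeasure (μ v)]
    (𝒜 : Finset (Set (∀ v, Ω v)))
    (vbl : Set (∀ v, Ω v) → Finset V)
    (hmeas : ∀ A ∈ 𝒜, MeasurableSet[MeasurableSpace.comap
      (fun (ω : ∀ v, Ω v) (v : (vbl A : Finset V)) => ω v.1) inferInstance] A)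
    (x : Set (∀ v, Ω v) → ℝ)
    (hx : ∀ A ∈ 𝒜, x A ∈ Set.Ioo (0 : ℝ) 1)
    (hcond : ∀ A ∈ 𝒜, (Measure.pi μ A).toReal ≤
      x A * ∏ B ∈ 𝒜.filter (fun B => B ≠ A ∧ (vbl A ∩ vbl B).Nonempty), (1 - x B)) :
    (∏ A ∈ 𝒜, (1 - x A)) ≤ (Measure.pi μ (⋂ A ∈ 𝒜, Aᶜ)).toReal ∧
      0 < (Measure.pi μ (⋂ A ∈ 𝒜, Aᶜ)).toReal := by
  set Γ := fun A => 𝒜.filter (fun B => B ≠ A ∧ (vbl A ∩ vbl B).Nonempty)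
  have hindep : ∀ A ∈ 𝒜, ∀ S ⊆ 𝒜, A ∉ S → Disjoint S (Γ A) →
      (Measure.pi μ).real (A ∩ ⋂ B ∈ S, Bᶜ) ≤
        (Measure.pi μ).real A * (Measure.pi μ).real (⋂ B ∈ S, Bᶜ) := by
    intro A hA S hS hAS hSΓ
    have hdisj : ∀ B ∈ S, Disjoint (vbl A) (vbl B) := fun B hB => by
      rw [Finset.disjoint_iff_inter_eq_empty, ← Finset.not_nonempty_iff_eq_empty]
      exact fun hAB => Finset.disjoint_left.1 hSΓ hB
        (Finset.mem_filter.2 ⟨hS hB, ne_of_mem_of_not_mem hB hAS, hAB⟩)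
    simp only [measureReal_def, Measure.pi_inter_biInter_compl_eq_mul μ vbl (hmeas A hA)
      (fun B hB => hmeas B (hS hB)) hdisj, ENNReal.toReal_mul, le_refl]
  have hLLL := prod_one_sub_le_measureReal_biInter_compl 𝒜 Γ (fun _ _ => Finset.filter_subset _ _)
    (fun A hA => measurableSet_of_measurableSet_comap_restrict (hmeas A hA)) hindep
    (fun A hA => Set.Ioo_subset_Icc_self (hx A hA)) hcond
  exact ⟨hLLL, (Finset.prod_pos fun A hA => sub_pos.2 (hx A hA).2).trans_le hLLL⟩
end

section
/- Let G be a finite d-regular simple graph and let δ ≤ d be a positive integer. Consider the random spanning subgraph H of G obtained as follows: independently for each vertex v, choose uniformly at random a set of δ distinct edges incident to v, and let E(H) be the union of all chosen sets. Then for every cycle x₁, x₂, …, x_k, x₁ in G, the probability that all k edges (x₁,x₂), …, (x_{k−1},x_k), (x_k,x₁) belong to E(H) is at most (2δ/d)^k. -/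
/-!
Every edge of `H` is chosen by one of its two endpoints, so the event that all `k` edges of the
cycle lie in `E(H)` is covered by `2 ^ k` events, one for each orientation assigning every edge
to an endpoint that chose it. For a fixed orientation the choices at different vertices are
independent, and a uniform `δ`-subset of the `d` edges at `v` contains `t` prescribed ones with
probability `C(d - t, δ - t) / C(d, δ) ≤ (δ / d) ^ t`. The edges of a cycle are distinct, so the
exponents add up to `k` and each orientation contributes at most `(δ / d) ^ k`.
-/

open SimpleGraph

/-- The space of configurations: for each vertex `v` a choice of a set of `δ` distinct
edges incident to `v`. -/
def edgeChoices {V : Type*} [Fintype V] [DecidableEq V]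
    (G : SimpleGraph V) [DecidableRel G.Adj] (δ : ℕ) : Type _ :=
  ∀ v : V, {s : Finset (Sym2 V) // s ⊆ G.incidenceFinset v ∧ s.card = δ}

open Finset

namespace Nat

theorem choose_mul_pow_le_pow_mul_choose {k n : ℕ} (hkn : k ≤ n) (t : ℕ) :
    k.choose t * n ^ t ≤ k ^ t * n.choose t := by
  induction t with
  | zero => simp
  | succ t ih =>
    have hstep : (k - t) * n ≤ k * (n - t) := by
      rw [Nat.sub_mul, Nat.mul_sub]
      exact Nat.sub_le_sub_left (by rw [Nat.mul_comm k t]; exact Nat.mul_le_mul_left t hkn) _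
    refine Nat.le_of_mul_le_mul_right ?_ t.succ_pos
    calc k.choose (t + 1) * n ^ (t + 1) * (t + 1)
        = k.choose (t + 1) * (t + 1) * n ^ t * n := by ring
      _ = k.choose t * n ^ t * ((k - t) * n) := by rw [choose_succ_right_eq]; ring
      _ ≤ k ^ t * n.choose t * (k * (n - t)) := Nat.mul_le_mul ih hstep
      _ = k ^ t * k * (n.choose t * (n - t)) := by ring
      _ = k ^ (t + 1) * n.choose (t + 1) * (t + 1) := by rw [← choose_succ_right_eq]; ring

theorem choose_sub_mul_pow_le {n k t : ℕ} (htk : t ≤ k) (htn : t ≤ n) :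
    (n - t).choose (k - t) * n ^ t ≤ k ^ t * n.choose k := by
  rcases lt_or_ge n k with hnk | hkn
  · rw [choose_eq_zero_of_lt (by omega), zero_mul]
    exact Nat.zero_le _
  refine Nat.le_of_mul_le_mul_right ?_ (choose_pos htn)
  calc (n - t).choose (k - t) * n ^ t * n.choose t
      = n.choose t * (n - t).choose (k - t) * n ^ t := by ring
    _ = n.choose k * (k.choose t * n ^ t) := by rw [← choose_mul htk]; ring
    _ ≤ n.choose k * (k ^ t * n.choose t) :=
        Nat.mul_le_mul_left _ (choose_mul_pow_le_pow_mul_choose hkn t)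
    _ = k ^ t * n.choose k * n.choose t := by ring

end Nat

namespace Finset

theorem card_filter_powersetCard_superset_mul_pow_le {α : Type*} [DecidableEq α]
    (A T : Finset α) (k : ℕ) :
    #{s ∈ A.powersetCard k | T ⊆ s} * #A ^ #T ≤ k ^ #T * (#A).choose k := by
  by_cases h : T ⊆ A ∧ #T ≤ k
  · rw [card_filter_powersetCard_subset T A k h.1 h.2]
    exact Nat.choose_sub_mul_pow_le h.2 (card_le_card h.1)
  · have hempty : {s ∈ A.powersetCard k | T ⊆ s} = ∅ := by
      refine filter_eq_empty_iff.2 fun s hs hTs => h ⟨hTs.trans (mem_powersetCard.1 hs).1, ?_⟩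
      exact (mem_powersetCard.1 hs).2 ▸ card_le_card hTs
    simp [hempty]

end Finset

section edgeChoices

variable {V : Type*} [Fintype V] [DecidableEq V] (G : SimpleGraph V) [DecidableRel G.Adj] (δ : ℕ)

instance : Fintype (edgeChoices G δ) :=
  inferInstanceAs (Fintype (∀ v : V, {s : Finset (Sym2 V) // s ⊆ G.incidenceFinset v ∧ #s = δ}))

instance : DecidableEq (edgeChoices G δ) :=
  inferInstanceAs
    (DecidableEq (∀ v : V, {s : Finset (Sym2 V) // s ⊆ G.incidenceFinset v ∧ #s = δ}))

theorem card_edgeChoices_superset (T : V → Finset (Sym2 V)) :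
    Nat.card {c : edgeChoices G δ // ∀ v, T v ⊆ (c v : Finset (Sym2 V))} =
      ∏ v, #{s ∈ (G.incidenceFinset v).powersetCard δ | T v ⊆ s} := by
  let e : {c : edgeChoices G δ // ∀ v, T v ⊆ (c v : Finset (Sym2 V))} ≃
      ∀ v, {x : {s : Finset (Sym2 V) // s ⊆ G.incidenceFinset v ∧ #s = δ} // T v ⊆ x} :=
    Equiv.subtypePiEquivPi (β := fun v =>
      {s : Finset (Sym2 V) // s ⊆ G.incidenceFinset v ∧ #s = δ}) (p := fun v x => T v ⊆ x)
  rw [Nat.card_congr e, Nat.card_pi]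
  refine prod_congr rfl fun v _ => ?_
  rw [Nat.card_congr (Equiv.subtypeSubtypeEquivSubtypeInter _ _), Nat.card_eq_fintype_card,
    Fintype.card_subtype]
  congr 1
  ext s
  simp [mem_powersetCard, and_assoc]

theorem card_edgeChoices : Nat.card (edgeChoices G δ) = ∏ v, (G.degree v).choose δ := by
  have h := card_edgeChoices_superset G δ fun _ => ∅
  rw [Nat.card_congr (Equiv.subtypeUnivEquiv fun (c : edgeChoices G δ) v =>
    empty_subset (c v : Finset (Sym2 V)))] at h
  simpa [card_powersetCard, card_incidenceFinset_eq_degree] using h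

variable {G} {d : ℕ}

theorem card_edgeChoices_superset_mul_pow_le (hreg : G.IsRegularOfDegree d)
    (T : V → Finset (Sym2 V)) :
    Nat.card {c : edgeChoices G δ // ∀ v, T v ⊆ (c v : Finset (Sym2 V))} * d ^ (∑ v, #(T v)) ≤
      δ ^ (∑ v, #(T v)) * Nat.card (edgeChoices G δ) := by
  rw [card_edgeChoices_superset, card_edgeChoices, ← prod_pow_eq_pow_sum, ← prod_pow_eq_pow_sum,
    ← prod_mul_distrib, ← prod_mul_distrib]
  refine prod_le_prod' fun v _ => ?_
  rw [← hreg v, ← card_incidenceFinset_eq_degree]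
  exact card_filter_powersetCard_superset_mul_pow_le _ _ _

theorem card_edgeChoices_oriented_mul_pow_le (hreg : G.IsRegularOfDegree d)
    {S : Finset (Sym2 V)} (f : S → V) :
    Nat.card {c : edgeChoices G δ // ∀ e : S, (e : Sym2 V) ∈ (c (f e) : Finset (Sym2 V))} *
      d ^ #S ≤ δ ^ #S * Nat.card (edgeChoices G δ) := by
  set T : V → Finset (Sym2 V) := fun v =>
    (univ.filter fun e => f e = v).map (Function.Embedding.subtype _)
  have hsum : ∑ v, #(T v) = #S := by
    simp only [T, card_map]
    rw [← card_eq_sum_card_fiberwise fun e _ => mem_univ (f e), card_univ, Fintype.card_coe]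
  have hiff (c : edgeChoices G δ) :
      (∀ e : S, (e : Sym2 V) ∈ (c (f e) : Finset (Sym2 V))) ↔
        ∀ v, T v ⊆ (c v : Finset (Sym2 V)) := by
    simp only [T, subset_iff, mem_map, mem_filter, mem_univ, true_and,
      Function.Embedding.subtype_apply, Subtype.forall, forall_exists_index, and_imp]
    exact ⟨fun h _ _ e he hv hx => hv ▸ hx ▸ h e he, fun h e he => h _ e he rfl rfl⟩
  rw [Nat.card_congr (Equiv.subtypeEquivRight hiff), ← hsum]
  exact card_edgeChoices_superset_mul_pow_le δ hreg T

theorem card_edgeChoices_covering_mul_pow_le (hreg : G.IsRegularOfDegree d)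
    (S : Finset (Sym2 V)) :
    Nat.card {c : edgeChoices G δ // ∀ e ∈ S, ∃ v, e ∈ (c v : Finset (Sym2 V))} * d ^ #S ≤
      (2 * δ) ^ #S * Nat.card (edgeChoices G δ) := by
  set O : Finset (S → V) := Fintype.piFinset fun e => (e : Sym2 V).toFinset
  set B : (S → V) → Finset (edgeChoices G δ) := fun f =>
    {c | ∀ e : S, (e : Sym2 V) ∈ (c (f e) : Finset (Sym2 V))}
  have hcover : ({c | ∀ e ∈ S, ∃ v, e ∈ (c v : Finset (Sym2 V))} : Finset (edgeChoices G δ)) ⊆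
      O.biUnion B := by
    intro c hc
    simp only [mem_filter, mem_univ, true_and] at hc
    choose g hg using fun e : S => hc e e.2
    refine mem_biUnion.2 ⟨g, Fintype.mem_piFinset.2 fun e => ?_, by simpa [B] using hg⟩
    exact Sym2.mem_toFinset.2 ((G.mem_incidenceFinset _ _).1 ((c (g e)).2.1 (hg e))).2
  have hO : #O ≤ 2 ^ #S := by
    rw [Fintype.card_piFinset, ← Fintype.card_coe S, ← card_univ]
    refine prod_le_pow_card _ _ _ fun e _ => ?_
    rw [Sym2.card_toFinset]
    split_ifs <;> omega
  calc Nat.card {c : edgeChoices G δ // ∀ e ∈ S, ∃ v, e ∈ (c v : Finset (Sym2 V))} * d ^ #S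
      ≤ (∑ f ∈ O, #(B f)) * d ^ #S := by
        rw [Nat.card_eq_fintype_card, Fintype.card_subtype]
        exact Nat.mul_le_mul_right _ ((card_le_card hcover).trans card_biUnion_le)
    _ ≤ ∑ _f ∈ O, δ ^ #S * Nat.card (edgeChoices G δ) := by
        rw [sum_mul]
        refine sum_le_sum fun f _ => ?_
        simpa [B, Nat.card_eq_fintype_card, Fintype.card_subtype] using
          card_edgeChoices_oriented_mul_pow_le δ hreg f
    _ ≤ 2 ^ #S * (δ ^ #S * Nat.card (edgeChoices G δ)) := by
        rw [sum_const, smul_eq_mul]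
        exact Nat.mul_le_mul_right _ hO
    _ = (2 * δ) ^ #S * Nat.card (edgeChoices G δ) := by rw [mul_pow, mul_assoc]

end edgeChoices

theorem random_subgraph_cycle_probability_general
    {V : Type*} [Fintype V] [DecidableEq V]
    (G : SimpleGraph V) [DecidableRel G.Adj] (d δ : ℕ)
    (hreg : G.IsRegularOfDegree d)
    (x : V) (p : G.Walk x x) (hp : p.IsCycle) :
    ((Nat.card {c : edgeChoices G δ //
        ∀ e ∈ p.edges, ∃ v : V, e ∈ (c v : Finset (Sym2 V))}) : ℝ) /
      (Nat.card (edgeChoices G δ)) ≤ ((2 * δ : ℝ) / d) ^ p.length := by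
  have hd : 0 < d := hreg x ▸ (G.degree_pos_iff_exists_adj x).2 ⟨_, p.adj_snd hp.not_nil⟩
  have hcount := card_edgeChoices_covering_mul_pow_le δ hreg p.edges.toFinset
  rw [List.toFinset_card_of_nodup hp.edges_nodup, p.length_edges] at hcount
  simp only [List.mem_toFinset] at hcount
  refine div_le_of_le_mul₀ (by positivity) (by positivity) ?_
  rw [div_pow, div_mul_eq_mul_div, le_div_iff₀ (by positivity)]
  exact_mod_cast hcount

/-- Let `G` be a finite `d`-regular simple graph and `0 < δ ≤ d`. Choose,
independently and uniformly at random for each vertex `v`, a set of `δ` distinct edges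
incident to `v`, and let `E(H)` be the union of the chosen sets. Then for every cycle of
length `k` in `G` the probability (w.r.t. the uniform measure on configurations) that all
`k` edges of the cycle belong to `E(H)` is at most `(2δ/d)^k`. -/
theorem random_subgraph_cycle_probability
    {V : Type*} [Fintype V] [DecidableEq V]
    (G : SimpleGraph V) [DecidableRel G.Adj] (d δ : ℕ)
    (hδpos : 0 < δ) (hδd : δ ≤ d) (hreg : G.IsRegularOfDegree d)
    (x : V) (p : G.Walk x x) (hp : p.IsCycle) :
    ((Nat.card {c : edgeChoices G δ //
        ∀ e ∈ p.edges, ∃ v : V, e ∈ (c v : Finset (Sym2 V))}) : ℝ) /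
      (Nat.card (edgeChoices G δ)) ≤ ((2 * δ : ℝ) / d) ^ p.length :=
  random_subgraph_cycle_probability_general G d δ hreg x p hp
end

section
/- Let G be a countable, loopless, undirected graph with finite maximum degree and with minimum degree at least δ, where δ is a positive integer. Then G has a spanning subgraph G₁ with minimum degree at least δ such that no edge of G₁ joins two distinct vertices that both have degree greater than δ in G₁. -/
/-!
Among the spanning subgraphs of `G` of minimum degree at least `δ`, Zorn's lemma yields a
minimal one: since neighbourhoods are finite, along a descending chain the neighbourhood of each
vertex stabilises, so the intersection of the chain still has minimum degree at least `δ`. In a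
minimal such subgraph no edge can join two vertices of degree greater than `δ`, for deleting it
would keep the minimum degree at least `δ`.
-/

open SimpleGraph

theorem zorn_ge_nonempty₀ {α : Type*} [Preorder α] (s : Set α)
    (ih : ∀ c ⊆ s, IsChain (· ≤ ·) c → ∀ y ∈ c, ∃ lb ∈ s, ∀ z ∈ c, lb ≤ z) (x : α) (hxs : x ∈ s) :
    ∃ m, m ≤ x ∧ Minimal (· ∈ s) m :=
  zorn_le_nonempty₀ (α := αᵒᵈ) s (fun c hc hch y hy => ih c hc hch.symm y hy) x hxs

namespace SimpleGraph

variable {V : Type*}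

/-- `ncard` is `0` on infinite sets, so this is only meaningful for locally finite graphs. -/
def HasMinDegreeAtLeast (H : SimpleGraph V) (δ : ℕ) : Prop :=
  ∀ v, δ ≤ (H.neighborSet v).ncard

lemma exists_neighborSet_sInf_eq {c : Set (SimpleGraph V)} (hc : IsChain (· ≤ ·) c)
    (hne : c.Nonempty) (v : V) (hfin : ∀ H ∈ c, (H.neighborSet v).Finite) :
    ∃ H ∈ c, (sInf c).neighborSet v = H.neighborSet v := by
  obtain ⟨_, ⟨H, hH, rfl⟩, hmin⟩ :=
    wellFounded_lt.has_min ((fun H => (H.neighborSet v).ncard) '' c) (hne.image _)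
  refine ⟨H, hH, Set.Subset.antisymm (fun w hw => (sInf_adj.1 hw).1 H hH) fun w hw => ?_⟩
  refine (sInf_adj_of_nonempty hne).2 fun H' hH' => ?_
  rcases hc.total hH hH' with hle | hle
  · exact hle hw
  · have hsub : H'.neighborSet v ⊆ H.neighborSet v := neighborSet_mono hle v
    have heq := Set.eq_of_subset_of_ncard_le hsub (not_lt.1 (hmin _ ⟨H', hH', rfl⟩)) (hfin H hH)
    rw [← heq] at hw
    exact hw

lemma hasMinDegreeAtLeast_sInf {c : Set (SimpleGraph V)} (hc : IsChain (· ≤ ·) c)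
    (hne : c.Nonempty) {δ : ℕ} (hδ : ∀ H ∈ c, H.HasMinDegreeAtLeast δ)
    (hfin : ∀ H ∈ c, ∀ v, (H.neighborSet v).Finite) : (sInf c).HasMinDegreeAtLeast δ := by
  intro v
  obtain ⟨H, hH, heq⟩ := exists_neighborSet_sInf_eq hc hne v fun H hH => hfin H hH v
  exact heq ▸ hδ H hH v

lemma exists_le_minimal_hasMinDegreeAtLeast {G : SimpleGraph V} {δ : ℕ}
    (hfin : ∀ v, (G.neighborSet v).Finite) (hG : G.HasMinDegreeAtLeast δ) :
    ∃ H ≤ G, Minimal (·.HasMinDegreeAtLeast δ) H := by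
  obtain ⟨H, hHG, hHmin⟩ :=
    zorn_ge_nonempty₀ {H | H ≤ G ∧ H.HasMinDegreeAtLeast δ} (fun c hcS hc y hy => by
      refine ⟨sInf c, ⟨(sInf_le hy).trans (hcS hy).1, ?_⟩, fun z hz => sInf_le hz⟩
      exact hasMinDegreeAtLeast_sInf hc ⟨y, hy⟩ (fun H hH => (hcS hH).2)
        fun H hH v => (hfin v).subset (neighborSet_mono (hcS hH).1 v)) G ⟨le_rfl, hG⟩
  exact ⟨H, hHG, hHmin.1.2, fun H' hH' hle => hHmin.2 ⟨hle.trans hHG, hH'⟩ hle⟩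

variable {H : SimpleGraph V} {x y v : V}

lemma neighborSet_deleteEdges_of_ne (hvx : v ≠ x) (hvy : v ≠ y) :
    (H.deleteEdges {s(x, y)}).neighborSet v = H.neighborSet v := by
  ext w
  simp [hvx, hvy]

lemma neighborSet_deleteEdges_left (hxy : x ≠ y) :
    (H.deleteEdges {s(x, y)}).neighborSet x = H.neighborSet x \ {y} := by
  ext w
  simp [hxy]

lemma le_ncard_neighborSet_deleteEdges_left {δ : ℕ} (hxy : H.Adj x y)
    (hfin : (H.neighborSet x).Finite) (hδ : δ < (H.neighborSet x).ncard) :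
    δ ≤ ((H.deleteEdges {s(x, y)}).neighborSet x).ncard := by
  rw [neighborSet_deleteEdges_left hxy.ne]
  have : (H.neighborSet x \ {y}).ncard + 1 = (H.neighborSet x).ncard :=
    Set.ncard_sdiff_singleton_add_one hxy hfin
  omega

lemma HasMinDegreeAtLeast.deleteEdges {δ : ℕ} (hH : H.HasMinDegreeAtLeast δ) (hxy : H.Adj x y)
    (hfx : (H.neighborSet x).Finite) (hfy : (H.neighborSet y).Finite)
    (hx : δ < (H.neighborSet x).ncard) (hy : δ < (H.neighborSet y).ncard) :
    (H.deleteEdges {s(x, y)}).HasMinDegreeAtLeast δ := by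
  intro v
  by_cases hvx : v = x
  · subst hvx
    exact le_ncard_neighborSet_deleteEdges_left hxy hfx hx
  by_cases hvy : v = y
  · subst hvy
    rw [Sym2.eq_swap]
    exact le_ncard_neighborSet_deleteEdges_left hxy.symm hfy hy
  rw [neighborSet_deleteEdges_of_ne hvx hvy]
  exact hH v

lemma not_lt_ncard_and_lt_ncard_of_minimal {δ : ℕ} (hH : Minimal (·.HasMinDegreeAtLeast δ) H)
    (hfin : ∀ v, (H.neighborSet v).Finite) (hxy : H.Adj x y) :
    ¬(δ < (H.neighborSet x).ncard ∧ δ < (H.neighborSet y).ncard) := by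
  rintro ⟨hx, hy⟩
  have hle := hH.2 (hH.1.deleteEdges hxy (hfin x) (hfin y) hx hy) (deleteEdges_le _)
  simpa using hle hxy

end SimpleGraph

theorem spanning_subgraph_no_adjacent_high_degrees_general
    {V : Type*} (G : SimpleGraph V) (δ : ℕ)
    (hmaxdeg : ∃ Δ : ℕ, ∀ v : V, (G.neighborSet v).Finite ∧ (G.neighborSet v).ncard ≤ Δ)
    (hmindeg : ∀ v : V, δ ≤ (G.neighborSet v).ncard) :
    ∃ G₁ : SimpleGraph V, G₁ ≤ G ∧
      (∀ v : V, δ ≤ (G₁.neighborSet v).ncard) ∧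
      (∀ x y : V, G₁.Adj x y →
        ¬(δ < (G₁.neighborSet x).ncard ∧ δ < (G₁.neighborSet y).ncard)) := by
  obtain ⟨Δ, hΔ⟩ := hmaxdeg
  have hfin (v : V) : (G.neighborSet v).Finite := (hΔ v).1
  obtain ⟨H, hHG, hH⟩ := exists_le_minimal_hasMinDegreeAtLeast hfin hmindeg
  have hHfin (v : V) : (H.neighborSet v).Finite := (hfin v).subset (neighborSet_mono hHG v)
  exact ⟨H, hHG, hH.1, fun x y hxy => not_lt_ncard_and_lt_ncard_of_minimal hH hHfin hxy⟩

/-- Let `G` be a countable (loopless, undirected) graph with finite maximum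
degree and minimum degree at least `δ > 0`. Then `G` has a spanning subgraph `G₁` with
minimum degree at least `δ` in which no edge joins two (distinct) vertices both of degree
greater than `δ`. -/
theorem spanning_subgraph_no_adjacent_high_degrees
    {V : Type*} [Countable V] (G : SimpleGraph V) (δ : ℕ) (hδpos : 0 < δ)
    (hmaxdeg : ∃ Δ : ℕ, ∀ v : V, (G.neighborSet v).Finite ∧ (G.neighborSet v).ncard ≤ Δ)
    (hmindeg : ∀ v : V, δ ≤ (G.neighborSet v).ncard) :
    ∃ G₁ : SimpleGraph V, G₁ ≤ G ∧
      (∀ v : V, δ ≤ (G₁.neighborSet v).ncard) ∧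
      (∀ x y : V, G₁.Adj x y →
        ¬(δ < (G₁.neighborSet x).ncard ∧ δ < (G₁.neighborSet y).ncard)) :=
  spanning_subgraph_no_adjacent_high_degrees_general G δ hmaxdeg hmindeg
end
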